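/- arXiv:2010.01671 — 7 statements merged into one kernel-verified Lean document; each statement's English description precedes it below -/
import Mathlib

section
/- If b > 0, c > 0, d ≠ k, and (kb + abck + cd − ck)/(c(d−k)) ≤ 0, then the only solution of the system z + (y−a)x + u = 0, 1 − by − x² = 0, −x − cz = 0, −dxy − ku = 0 with x, y, z, u real is (x,y,z,u) = (0, 1/b, 0, 0). -/
/-!
Eliminating `z` and `u` from the first, third and fourth equations leaves
`x * (c(k - d) y - k(ac + 1)) = 0`. If `x ≠ 0`, this fixes `y`, and then the second equation gives
`x² = (kb + abck + cd - ck) / (c(d - k))`, which the hypothesis forbids. With `x = 0` the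
remaining coordinates are read off directly.
-/

section Equilibrium

variable {a b c d k x y z u : ℝ}

theorem sq_mul_eq_of_equilibrium_of_ne_zero (h1 : z + (y - a)*x + u = 0) (h2 : 1 - b*y - x^2 = 0)
    (h3 : -x - c*z = 0) (h4 : -d*x*y - k*u = 0) (hx : x ≠ 0) :
    x^2 * (c*(d - k)) = k*b + a*b*c*k + c*d - c*k := by
  have hy : c*(k - d)*y = k*(a*c + 1) := by
    have hprod : x * (c*(k - d)*y - k*(a*c + 1)) = 0 := by
      linear_combination c*k*h1 + k*h3 + c*h4
    exact sub_eq_zero.mp ((mul_eq_zero.mp hprod).resolve_left hx)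
  linear_combination (-(c*(d - k)))*h2 + b*hy

theorem eq_zero_of_equilibrium (hc : c ≠ 0) (hdk : d ≠ k)
    (hcond : (k*b + a*b*c*k + c*d - c*k) / (c*(d - k)) ≤ 0)
    (h1 : z + (y - a)*x + u = 0) (h2 : 1 - b*y - x^2 = 0) (h3 : -x - c*z = 0)
    (h4 : -d*x*y - k*u = 0) : x = 0 := by
  by_contra hx
  have hD : c*(d - k) ≠ 0 := mul_ne_zero hc (sub_ne_zero.mpr hdk)
  have hpos : 0 < (k*b + a*b*c*k + c*d - c*k) / (c*(d - k)) := by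
    rw [← sq_mul_eq_of_equilibrium_of_ne_zero h1 h2 h3 h4 hx, mul_div_cancel_right₀ _ hD]
    positivity
  linarith

end Equilibrium

theorem equilibrium_unique (a b c d k : ℝ) (hb : b > 0) (hc : c > 0) (hdk : d ≠ k)
    (hcond : (k*b + a*b*c*k + c*d - c*k) / (c*(d - k)) ≤ 0) :
    ∀ x y z u : ℝ,
      z + (y - a)*x + u = 0 →
      1 - b*y - x^2 = 0 →
      -x - c*z = 0 →
      -d*x*y - k*u = 0 →
      x = 0 ∧ y = 1/b ∧ z = 0 ∧ u = 0 := by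
  intro x y z u h1 h2 h3 h4
  obtain rfl : x = 0 := eq_zero_of_equilibrium hc.ne' hdk hcond h1 h2 h3 h4
  obtain rfl : z = 0 := by
    simpa [hc.ne'] using h3
  refine ⟨rfl, ?_, rfl, by linarith⟩
  field_simp
  linarith
end

section
/- Let K > 0 and b > 0 with K > b/2, and set ω₊ = √(2Kb − b²). Then ω₊ > 0 and λ = i·ω₊ satisfies λ + b − K + K·e^{−λτ} = 0 when τ = (1/ω₊)·arccos((K−b)/K). -/
/-!
With `θ = arccos ((K - b) / K)` we have `K cos θ = K - b` and
`K sin θ = √(K² - (K - b)²) = √(2Kb - b²) = ω`, so `K e^{-iθ} = (K - b) - iω` cancels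
`iω + b - K`. The choice of `τ` makes `ωτ = θ`.
-/

open Complex

lemma Real.mul_cos_arccos_sub_div {K b : ℝ} (hK : 0 < K) (hb : 0 ≤ b) (hbK : b ≤ 2 * K) :
    K * Real.cos (Real.arccos ((K - b) / K)) = K - b := by
  rw [Real.cos_arccos ((le_div_iff₀ hK).2 (by linarith)) ((div_le_one hK).2 (by linarith))]
  field_simp

lemma Real.mul_sin_arccos_sub_div {K b : ℝ} (hK : 0 < K) :
    K * Real.sin (Real.arccos ((K - b) / K)) = Real.sqrt (2 * K * b - b ^ 2) := by
  have hsq : K ^ 2 * (1 - ((K - b) / K) ^ 2) = 2 * K * b - b ^ 2 := by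
    field_simp
    ring
  rw [Real.sin_arccos, ← hsq, Real.sqrt_mul (sq_nonneg K), Real.sqrt_sq hK.le]

lemma I_mul_add_sub_add_mul_exp_neg_eq_zero {K b ω θ : ℝ}
    (hcos : K * Real.cos θ = K - b) (hsin : K * Real.sin θ = ω) :
    I * ω + b - K + K * exp (-(I * θ)) = 0 := by
  have hexp : exp (-(I * θ)) = Real.cos θ - Real.sin θ * I := by
    rw [show -(I * θ) = ((-θ : ℝ) : ℂ) * I by push_cast; ring, exp_mul_I,
      ← ofReal_cos, ← ofReal_sin, Real.cos_neg, Real.sin_neg]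
    push_cast
    ring
  rw [hexp, mul_sub, ← mul_assoc]
  simp only [← ofReal_mul, hcos, hsin]
  push_cast
  ring

theorem imaginary_root_at_tau0 (K b : ℝ) (hK : K > 0) (hb : b > 0) (hKb : K > b/2) :
    let ω := Real.sqrt (2*K*b - b^2)
    let τ := (1/ω) * Real.arccos ((K - b)/K)
    ω > 0 ∧
    (Complex.I * ω) + (b : ℂ) - (K : ℂ) +
      (K : ℂ) * Complex.exp (-(Complex.I * ω) * τ) = 0 := by
  intro ω τ
  have hω : ω > 0 := Real.sqrt_pos.2 (by nlinarith)
  have hωτ : -(I * ω) * τ = -(I * (Real.arccos ((K - b) / K) : ℝ)) := by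
    have hω0 : (ω : ℂ) ≠ 0 := ofReal_ne_zero.2 hω.ne'
    simp only [τ]
    push_cast
    field_simp
  refine ⟨hω, ?_⟩
  rw [hωτ]
  exact I_mul_add_sub_add_mul_exp_neg_eq_zero
    (Real.mul_cos_arccos_sub_div hK hb.le (by linarith)) (Real.mul_sin_arccos_sub_div hK)
end

section
/- Let K > 0, b > 0. If K ≤ b/2, then there is no ω > 0 such that λ = iω is a root of λ + b − K + K·e^{−λτ} = 0 for any τ ≥ 0. -/
/-!
Splitting the characteristic equation at `λ = iω` into real and imaginary parts gives
`ω = K sin(ωτ)` and `K - b = K cos(ωτ)`. When `K ≤ b/2` the second equation forces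
`cos(ωτ) ≤ -1`, hence `cos(ωτ) = -1` and `sin(ωτ) = 0`, so the first one gives `ω = 0`.
-/

open Complex

theorem mul_I_add_sub_add_mul_exp_eq_zero_iff (K b ω τ : ℝ) :
    (I * ω) + (b : ℂ) - (K : ℂ) + (K : ℂ) * exp (-(I * ω) * τ) = 0 ↔
      ω = K * Real.sin (ω * τ) ∧ K - b = K * Real.cos (ω * τ) := by
  have hexp : exp (-(I * ω) * τ) = Real.cos (ω * τ) - Real.sin (ω * τ) * I := by
    rw [show -(I * ω) * τ = ((-(ω * τ) : ℝ) : ℂ) * I by push_cast; ring, exp_mul_I]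
    push_cast
    rw [cos_neg, sin_neg]
    ring
  rw [hexp, Complex.ext_iff]
  simp only [add_re, sub_re, add_im, sub_im, mul_re, mul_im, I_re, I_im, ofReal_re,
    ofReal_im, zero_re, zero_im]
  constructor <;> rintro ⟨h_re, h_im⟩ <;> constructor <;> linarith

theorem Real.sin_eq_zero_of_cos_le_neg_one {θ : ℝ} (h : Real.cos θ ≤ -1) : Real.sin θ = 0 :=
  Real.sin_eq_zero_iff_cos_eq.mpr (Or.inr (le_antisymm h (Real.neg_one_le_cos θ)))

theorem no_imaginary_root_general (K b : ℝ) (hK : K > 0) (hKb : K ≤ b/2) :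
    ¬ ∃ ω : ℝ, ω > 0 ∧ ∃ τ : ℝ, τ ≥ 0 ∧
      (Complex.I * ω) + (b : ℂ) - (K : ℂ) +
        (K : ℂ) * Complex.exp (-(Complex.I * ω) * τ) = 0 := by
  rintro ⟨ω, hω, τ, -, h⟩
  obtain ⟨h_im, h_re⟩ := (mul_I_add_sub_add_mul_exp_eq_zero_iff K b ω τ).mp h
  have hcos : Real.cos (ω * τ) ≤ -1 := by
    by_contra! hlt
    nlinarith
  rw [Real.sin_eq_zero_of_cos_le_neg_one hcos, mul_zero] at h_im
  exact hω.ne' h_im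

theorem no_imaginary_root (K b : ℝ) (hK : K > 0) (hb : b > 0) (hKb : K ≤ b/2) :
    ¬ ∃ ω : ℝ, ω > 0 ∧ ∃ τ : ℝ, τ ≥ 0 ∧
      (Complex.I * ω) + (b : ℂ) - (K : ℂ) +
        (K : ℂ) * Complex.exp (-(Complex.I * ω) * τ) = 0 :=
  no_imaginary_root_general K b hK hKb
end

section
/- Let K > b/2 > 0, ω₊ = √(2Kb − b²), and τ_j = (1/ω₊)·arccos((K−b)/K) + 2jπ/ω₊ for each natural number j. Then for every j, λ = i·ω₊ is a root of λ + b − K + K·e^{−λτ_j} = 0. -/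
/-! With `θ = arccos ((K - b) / K)` one has `K cos θ = K - b` and `K sin θ = ω₊`, so
`K e^{-iθ} = K - b - i ω₊`, and `ω₊ τ_j` differs from `θ` by a multiple of `2π`. -/

theorem mul_sin_arccos_div {K : ℝ} (hK : 0 < K) (c : ℝ) :
    K * Real.sin (Real.arccos (c / K)) = Real.sqrt (K ^ 2 - c ^ 2) := by
  have hsq : 1 - (c / K) ^ 2 = (K ^ 2 - c ^ 2) / K ^ 2 := by field_simp
  rw [Real.sin_arccos, hsq, Real.sqrt_div' _ (sq_nonneg K), Real.sqrt_sq hK.le]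
  field_simp

theorem mul_exp_neg_arccos_div_mul_I {K c : ℝ} (hK : 0 < K) (hc : |c| ≤ K) :
    (K : ℂ) * Complex.exp (-(Real.arccos (c / K) : ℂ) * Complex.I)
      = c - Real.sqrt (K ^ 2 - c ^ 2) * Complex.I := by
  obtain ⟨hc₁, hc₂⟩ := abs_le.mp hc
  have hcos : K * Real.cos (Real.arccos (c / K)) = c := by
    rw [Real.cos_arccos (by rwa [le_div_iff₀ hK, neg_one_mul]) (by rwa [div_le_one hK])]
    field_simp
  calc (K : ℂ) * Complex.exp (-(Real.arccos (c / K) : ℂ) * Complex.I)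
      = (K * Real.cos (Real.arccos (c / K)) : ℝ)
          - (K * Real.sin (Real.arccos (c / K)) : ℝ) * Complex.I := by
        rw [← Complex.ofReal_neg, Complex.exp_mul_I, ← Complex.ofReal_cos, ← Complex.ofReal_sin,
          Real.cos_neg, Real.sin_neg]
        push_cast
        ring
    _ = c - Real.sqrt (K ^ 2 - c ^ 2) * Complex.I := by rw [hcos, mul_sin_arccos_div hK]

theorem imaginary_root_at_tauj (K b : ℝ) (hb : b > 0) (hKb : K > b/2) :
    let ωp := Real.sqrt (2*K*b - b^2)
    ∀ j : ℕ,
      let τj := (1/ωp) * Real.arccos ((K - b)/K) + 2*(j:ℝ)*Real.pi/ωp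
      (Complex.I * ωp) + (b : ℂ) - (K : ℂ) +
        (K : ℂ) * Complex.exp (-(Complex.I * ωp) * τj) = 0 := by
  intro ωp j τj
  have hK : 0 < K := by linarith
  have hωp : (ωp : ℂ) ≠ 0 := Complex.ofReal_ne_zero.mpr (Real.sqrt_pos.mpr (by nlinarith)).ne'
  have hpolar : (K : ℂ) * Complex.exp (-(Real.arccos ((K - b) / K) : ℂ) * Complex.I)
      = (K - b : ℝ) - ωp * Complex.I := by
    have hωp_eq : Real.sqrt (K ^ 2 - (K - b) ^ 2) = ωp := by simp only [ωp]; ring_nf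
    rw [mul_exp_neg_arccos_div_mul_I hK (abs_le.mpr ⟨by linarith, by linarith⟩), hωp_eq]
  have hphase : -(Complex.I * ωp) * τj
      = -(Real.arccos ((K - b) / K) : ℂ) * Complex.I - j * (2 * Real.pi * Complex.I) := by
    simp only [τj]
    push_cast
    field_simp
    ring
  rw [hphase, Complex.exp_periodic.sub_nat_mul_eq, hpolar]
  push_cast
  ring
end

section
/- Let λ(τ) = α(τ) + iβ(τ) be a differentiable branch of roots of λ + b − K + K·e^{−λτ} = 0 with λ(τ_j) = i·ω₊, where ω₊ = √(2Kb − b²) > 0 and τ_j ≥ 0 are such that i·ω₊ is a root at τ = τ_j. Then dα/dτ at τ = τ_j equals ω₊² / ((cos(ω₊τ_j) − Kτ_j)² + sin²(ω₊τ_j)), which is strictly positive. -/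
/-!
Differentiating `λ + b - K + K e^{-λτ} = 0` along the branch gives
`λ' · (1 - K τ e^{-λτ}) = K λ e^{-λτ}`, and on the branch `K e^{-λτ} = K - b - λ`.
At `λ = iω` the real part of `λ'` is therefore `ω² / |1 - K τ e^{-iωτ}|²`, and since
`|e^{-iωτ}| = 1` that denominator is `|e^{iωτ} - K τ|² = (cos ωτ - Kτ)² + sin² ωτ`.
It cannot vanish: `sin ωτ = 0` would force `ω = K sin ωτ = 0`.
-/

open Complex

noncomputable def delayCharFun (K b z : ℂ) (τ : ℝ) : ℂ :=
  z + b - K + K * cexp (-z * τ)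

theorem HasDerivAt.mul_one_sub_eq_of_delayCharFun_eq_zero {K b : ℂ} {ℓ : ℝ → ℂ} {ℓ' : ℂ}
    {τ : ℝ} (hℓ : HasDerivAt ℓ ℓ' τ) (hroot : ∀ t, delayCharFun K b (ℓ t) t = 0) :
    ℓ' * (1 - (τ : ℂ) * (K - b - ℓ τ)) = ℓ τ * (K - b - ℓ τ) := by
  have hid : HasDerivAt (fun t : ℝ => (t : ℂ)) 1 τ := by
    simpa using (hasDerivAt_id τ).ofReal_comp
  have hF : HasDerivAt (fun t : ℝ => delayCharFun K b (ℓ t) t)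
      (ℓ' + K * (cexp (-ℓ τ * (τ : ℂ)) * (-ℓ' * (τ : ℂ) + -ℓ τ * 1))) τ :=
    ((hℓ.add_const b).sub_const K).add ((hℓ.neg.mul hid).cexp.const_mul K)
  have hzero : ℓ' + K * (cexp (-ℓ τ * (τ : ℂ)) * (-ℓ' * (τ : ℂ) + -ℓ τ * 1)) = 0 :=
    hF.unique (by simpa only [funext hroot] using hasDerivAt_const τ (0 : ℂ))
  have hexp : K * cexp (-ℓ τ * (τ : ℂ)) = K - b - ℓ τ := by
    rw [← sub_eq_zero, ← hroot τ, delayCharFun]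
    ring
  linear_combination hzero - (-ℓ' * (τ : ℂ) - ℓ τ) * hexp

theorem cos_sin_of_delayCharFun_mul_I_eq_zero {K b ω τ : ℝ}
    (h : delayCharFun K b (ω * I) τ = 0) :
    K * Real.cos (ω * τ) = K - b ∧ K * Real.sin (ω * τ) = ω := by
  have hexp : cexp (-(ω * I) * τ) = Real.cos (ω * τ) - Real.sin (ω * τ) * I := by
    rw [show -(ω * I) * τ = ((-(ω * τ) : ℝ) : ℂ) * I by push_cast; ring, exp_mul_I,
      ofReal_neg, cos_neg, sin_neg, ← ofReal_cos, ← ofReal_sin]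
    ring
  rw [delayCharFun, hexp] at h
  have hre := congrArg re h
  have him := congrArg im h
  simp only [add_re, sub_re, mul_re, add_im, sub_im, mul_im, ofReal_re, ofReal_im, I_re, I_im,
    zero_re, zero_im] at hre him
  constructor <;> linarith

theorem re_mul_normSq_eq_sq_of_mul_eq {x : ℂ} {K b ω τ : ℝ}
    (h : x * (1 - τ * (K - b - ω * I)) = ω * I * (K - b - ω * I)) :
    x.re * normSq (1 - τ * (K - b - ω * I)) = ω ^ 2 := by
  have hre := congrArg re h
  have him := congrArg im h
  simp only [sub_re, mul_re, sub_im, mul_im, ofReal_re, ofReal_im, I_re, I_im, one_re,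
    one_im] at hre him
  rw [normSq_apply]
  simp only [sub_re, sub_im, mul_re, mul_im, ofReal_re, ofReal_im, I_re, I_im, one_re, one_im]
  linear_combination (1 - τ * (K - b)) * hre + τ * ω * him

theorem normSq_one_sub_mul_eq_of_cos_sin {K b ω τ : ℝ} (hcos : K * Real.cos (ω * τ) = K - b)
    (hsin : K * Real.sin (ω * τ) = ω) :
    normSq (1 - τ * (K - b - ω * I)) = (Real.cos (ω * τ) - K * τ) ^ 2 + Real.sin (ω * τ) ^ 2 := by
  rw [normSq_apply]
  simp only [sub_re, sub_im, mul_re, mul_im, ofReal_re, ofReal_im, I_re, I_im, one_re, one_im]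
  linear_combination τ * (2 - τ * (K - b) - τ * K * Real.cos (ω * τ)) * hcos
    - τ ^ 2 * (ω + K * Real.sin (ω * τ)) * hsin
    - (1 - K ^ 2 * τ ^ 2) * Real.sin_sq_add_cos_sq (ω * τ)

theorem transversality_general (K b : ℝ)
    (ωp : ℝ) (hωpos : ωp > 0)
    (τj : ℝ)
    (α β : ℝ → ℝ) (hα : Differentiable ℝ α) (hβ : Differentiable ℝ β)
    (hroot : ∀ τ : ℝ,
      ((α τ : ℂ) + (β τ : ℂ) * Complex.I) + (b : ℂ) - (K : ℂ) +
        (K : ℂ) * Complex.exp (-(((α τ : ℂ) + (β τ : ℂ) * Complex.I)) * τ) = 0)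
    (hval : α τj = 0 ∧ β τj = ωp) :
    deriv α τj = ωp^2 / ((Real.cos (ωp*τj) - K*τj)^2 + (Real.sin (ωp*τj))^2) ∧
    0 < deriv α τj := by
  obtain ⟨hα0, hβ0⟩ := hval
  let ℓ : ℝ → ℂ := fun τ => α τ + β τ * I
  have hℓ : HasDerivAt ℓ (deriv α τj + deriv β τj * I) τj :=
    (hα τj).hasDerivAt.ofReal_comp.add ((hβ τj).hasDerivAt.ofReal_comp.mul_const I)
  have hℓτj : ℓ τj = ωp * I := by simp [ℓ, hα0, hβ0]
  have hlin := hℓ.mul_one_sub_eq_of_delayCharFun_eq_zero hroot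
  rw [hℓτj] at hlin
  have hre := re_mul_normSq_eq_sq_of_mul_eq hlin
  obtain ⟨hcos, hsin⟩ := cos_sin_of_delayCharFun_mul_I_eq_zero
    (by rw [← hℓτj]; exact hroot τj)
  rw [normSq_one_sub_mul_eq_of_cos_sin hcos hsin] at hre
  have hsin0 : Real.sin (ωp * τj) ≠ 0 := fun h => by
    rw [h, mul_zero] at hsin
    linarith
  have hden : 0 < (Real.cos (ωp * τj) - K * τj) ^ 2 + Real.sin (ωp * τj) ^ 2 := by positivity
  have hderiv :
      deriv α τj = ωp ^ 2 / ((Real.cos (ωp * τj) - K * τj) ^ 2 + Real.sin (ωp * τj) ^ 2) := by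
    rw [eq_div_iff hden.ne', ← hre]
    simp
  exact ⟨hderiv, hderiv ▸ by positivity⟩

theorem transversality (K b : ℝ) (hb : b > 0) (hKb : K > b/2)
    (ωp : ℝ) (hωp : ωp = Real.sqrt (2*K*b - b^2)) (hωpos : ωp > 0)
    (τj : ℝ) (hτj : τj ≥ 0)
    (α β : ℝ → ℝ) (hα : Differentiable ℝ α) (hβ : Differentiable ℝ β)
    (hroot : ∀ τ : ℝ,
      ((α τ : ℂ) + (β τ : ℂ) * Complex.I) + (b : ℂ) - (K : ℂ) +
        (K : ℂ) * Complex.exp (-(((α τ : ℂ) + (β τ : ℂ) * Complex.I)) * τ) = 0)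
    (hval : α τj = 0 ∧ β τj = ωp) :
    deriv α τj = ωp^2 / ((Real.cos (ωp*τj) - K*τj)^2 + (Real.sin (ωp*τj))^2) ∧
    0 < deriv α τj :=
  transversality_general K b ωp hωpos τj α β hα hβ hroot hval
end

section
/- Let a₁, b₁, c₁, d₁, a₂, b₂, c₂ be real and suppose iω with ω > 0 is a root of λ⁴ + a₁λ³ + b₁λ² + c₁λ + d₁ + (a₂λ³ + b₂λ² + c₂λ)e^{−λτ} = 0 for some τ ≥ 0. Then z = ω² satisfies z⁴ + p z³ + q z² + u z + v = 0, where p = a₁² − 2b₁ − a₂², q = b₁² + 2d₁ − 2a₁c₁ − b₂² + 2a₂c₂, u = c₁² − 2b₁d₁ − c₂², v = d₁². -/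
/-!
Since `|e^{-iωτ}| = 1`, the characteristic equation `P(iω) + Q(iω) e^{-iωτ} = 0` forces
`|P(iω)|² = |Q(iω)|²`, which eliminates `τ`. For real coefficients the real and imaginary
parts of `P(iω)` and `Q(iω)` are polynomials in `ω` with only even, resp. only odd, powers,
so `|P(iω)|² - |Q(iω)|²` is a polynomial in `z = ω²`: the stated quartic.
-/

open Complex

lemma norm_eq_norm_of_add_mul_eq_zero {P Q e : ℂ} (he : ‖e‖ = 1) (h : P + Q * e = 0) :
    ‖P‖ = ‖Q‖ := by
  rw [eq_neg_of_add_eq_zero_left h, norm_neg, norm_mul, he, mul_one]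

lemma norm_exp_neg_I_mul_ofReal_mul (ω τ : ℝ) : ‖exp (-(I * ω) * τ)‖ = 1 := by
  have harg : -(I * ω) * τ = ((-(ω * τ) : ℝ) : ℂ) * I := by push_cast; ring
  rw [harg, norm_exp_ofReal_mul_I]

lemma quartic_at_I_mul (a b c d ω : ℝ) :
    (I * ω) ^ 4 + a * (I * ω) ^ 3 + b * (I * ω) ^ 2 + c * (I * ω) + d
      = ((ω ^ 4 - b * ω ^ 2 + d : ℝ) : ℂ) + ((c * ω - a * ω ^ 3 : ℝ) : ℂ) * I := by
  push_cast
  linear_combination (ω ^ 4 * (I ^ 2 - 1) + a * ω ^ 3 * I + b * ω ^ 2) * I_sq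

lemma cubic_at_I_mul (a b c ω : ℝ) :
    a * (I * ω) ^ 3 + b * (I * ω) ^ 2 + c * (I * ω)
      = ((-(b * ω ^ 2) : ℝ) : ℂ) + ((c * ω - a * ω ^ 3 : ℝ) : ℂ) * I := by
  push_cast
  linear_combination (a * ω ^ 3 * I + b * ω ^ 2) * I_sq

theorem quartic_in_z_general (a1 b1 c1 d1 a2 b2 c2 ω τ : ℝ)
    (hroot : (Complex.I*ω)^4 + (a1:ℂ)*(Complex.I*ω)^3 + (b1:ℂ)*(Complex.I*ω)^2
        + (c1:ℂ)*(Complex.I*ω) + (d1:ℂ)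
        + ((a2:ℂ)*(Complex.I*ω)^3 + (b2:ℂ)*(Complex.I*ω)^2 + (c2:ℂ)*(Complex.I*ω))
          * Complex.exp (-(Complex.I*ω)*τ) = 0) :
    let p := a1^2 - 2*b1 - a2^2
    let q := b1^2 + 2*d1 - 2*a1*c1 - b2^2 + 2*a2*c2
    let u := c1^2 - 2*b1*d1 - c2^2
    let v := d1^2
    let z := ω^2
    z^4 + p*z^3 + q*z^2 + u*z + v = 0 := by
  intro p q u v z
  rw [quartic_at_I_mul, cubic_at_I_mul] at hroot
  have hnorm := congrArg (· ^ 2)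
    (norm_eq_norm_of_add_mul_eq_zero (norm_exp_neg_I_mul_ofReal_mul ω τ) hroot)
  simp only [← normSq_eq_norm_sq, normSq_add_mul_I] at hnorm
  linear_combination hnorm

theorem quartic_in_z (a1 b1 c1 d1 a2 b2 c2 ω τ : ℝ) (hω : ω > 0) (hτ : τ ≥ 0)
    (hroot : (Complex.I*ω)^4 + (a1:ℂ)*(Complex.I*ω)^3 + (b1:ℂ)*(Complex.I*ω)^2
        + (c1:ℂ)*(Complex.I*ω) + (d1:ℂ)
        + ((a2:ℂ)*(Complex.I*ω)^3 + (b2:ℂ)*(Complex.I*ω)^2 + (c2:ℂ)*(Complex.I*ω))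
          * Complex.exp (-(Complex.I*ω)*τ) = 0) :
    let p := a1^2 - 2*b1 - a2^2
    let q := b1^2 + 2*d1 - 2*a1*c1 - b2^2 + 2*a2*c2
    let u := c1^2 - 2*b1*d1 - c2^2
    let v := d1^2
    let z := ω^2
    z^4 + p*z^3 + q*z^2 + u*z + v = 0 :=
  quartic_in_z_general a1 b1 c1 d1 a2 b2 c2 ω τ hroot
end

section
/- With R, Q real-coefficient polynomials as above and h the real quartic with h(ω²) = |R(iω)|² − |Q(iω)|², if iω₀ (ω₀ > 0) is a multiple root of R(λ) + Q(λ)e^{−λτ₀} = 0 for some real τ₀ ≥ 0 with R(iω₀) ≠ 0, then h'(ω₀²) = 0. -/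
/-!
Write `e = exp (-λ₀ τ₀)`, a number of modulus one. The two equations give `R = -Q e` and
`R' = -(Q' - τ₀ Q) e`, hence `R' · conj R = Q' · conj Q - τ₀ |Q|²` and so
`Im (R' · conj R) = Im (Q' · conj Q)` at `λ₀ = iω₀`. For a real polynomial `P` with
`|P(iω)|² = ρ(ω²)` one has `Im (P'(iω) · conj P(iω)) = -ω ρ'(ω²)`, and `h = ρ_R - ρ_Q`;
so `ω₀ h'(ω₀²) = 0`.
-/

open Complex ComplexConjugate

lemma im_mul_conj_eq_of_double_root {R R' Q Q' e : ℂ} {τ : ℝ} (he : ‖e‖ = 1)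
    (hroot : R + Q * e = 0) (hderiv : R' + Q' * e - τ * Q * e = 0) :
    (R' * conj R).im = (Q' * conj Q).im := by
  have he_conj : e * conj e = 1 := by
    rw [mul_conj, normSq_eq_norm_sq, he]; norm_num
  have hroot_conj : conj R + conj Q * conj e = 0 := by
    simpa using congrArg conj hroot
  have hprod : R' * conj R = Q' * conj Q - τ * (Q * conj Q) := by
    linear_combination conj R * hderiv - (Q' - τ * Q) * e * hroot_conj
      + (Q' - τ * Q) * conj Q * he_conj
  rw [hprod, mul_conj, sub_im, ← ofReal_mul, ofReal_im, sub_zero]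

lemma im_quartic_deriv_mul_conj (a b c d ω : ℝ) :
    ((4 * (I * ω) ^ 3 + 3 * a * (I * ω) ^ 2 + 2 * b * (I * ω) + c) *
        conj ((I * ω) ^ 4 + a * (I * ω) ^ 3 + b * (I * ω) ^ 2 + c * (I * ω) + d)).im =
      -ω * (4 * (ω ^ 2) ^ 3 + 3 * (a ^ 2 - 2 * b) * (ω ^ 2) ^ 2
        + 2 * (b ^ 2 + 2 * d - 2 * a * c) * ω ^ 2 + (c ^ 2 - 2 * b * d)) := by
  simp only [pow_succ, pow_zero, one_mul, map_add, map_mul, conj_I, conj_ofReal, neg_mul, mul_neg, neg_neg,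
    mul_im, add_re, mul_re, re_ofNat, I_re, ofReal_re, zero_mul, I_im, ofReal_im, mul_zero, sub_self, zero_add,
    zero_sub, add_zero, im_ofNat, neg_zero, sub_zero, add_im, neg_im, sub_neg_eq_add, neg_re]
  ring

lemma im_cubic_deriv_mul_conj (a b c ω : ℝ) :
    ((3 * a * (I * ω) ^ 2 + 2 * b * (I * ω) + c) *
        conj (a * (I * ω) ^ 3 + b * (I * ω) ^ 2 + c * (I * ω))).im =
      -ω * (3 * a ^ 2 * (ω ^ 2) ^ 2 + 2 * (b ^ 2 - 2 * a * c) * ω ^ 2 + c ^ 2) := by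
  simp only [pow_succ, pow_zero, one_mul, map_add, map_mul, conj_ofReal, conj_I, neg_mul, mul_neg, neg_neg,
    mul_im, add_re, mul_re, re_ofNat, ofReal_re, im_ofNat, ofReal_im, mul_zero, sub_zero, I_re, zero_mul, I_im,
    sub_self, zero_add, zero_sub, add_zero, add_im, neg_im, neg_zero, neg_re]
  ring

theorem multiple_root_implies_deriv_zero_general (a1 b1 c1 d1 a2 b2 c2 ω0 τ0 : ℝ)
    (hω : ω0 > 0) :
    let R : ℂ → ℂ := fun lam => lam^4 + (a1:ℂ)*lam^3 + (b1:ℂ)*lam^2 + (c1:ℂ)*lam + (d1:ℂ)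
    let R' : ℂ → ℂ := fun lam => 4*lam^3 + 3*(a1:ℂ)*lam^2 + 2*(b1:ℂ)*lam + (c1:ℂ)
    let Q : ℂ → ℂ := fun lam => (a2:ℂ)*lam^3 + (b2:ℂ)*lam^2 + (c2:ℂ)*lam
    let Q' : ℂ → ℂ := fun lam => 3*(a2:ℂ)*lam^2 + 2*(b2:ℂ)*lam + (c2:ℂ)
    let p := a1^2 - 2*b1 - a2^2
    let q := b1^2 + 2*d1 - 2*a1*c1 - b2^2 + 2*a2*c2
    let u := c1^2 - 2*b1*d1 - c2^2
    let h' : ℝ → ℝ := fun z => 4*z^3 + 3*p*z^2 + 2*q*z + u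
    let lam0 : ℂ := Complex.I * ω0
    R lam0 + Q lam0 * Complex.exp (-lam0 * τ0) = 0 →
    R lam0 ≠ 0 →
    R' lam0 + Q' lam0 * Complex.exp (-lam0 * τ0) - (τ0:ℂ) * Q lam0 * Complex.exp (-lam0 * τ0) = 0 →
    h' (ω0^2) = 0 := by
  intro R R' Q Q' p q u h' lam0 hroot _ hderiv
  have he : ‖exp (-lam0 * τ0)‖ = 1 := by
    rw [show -lam0 * τ0 = ↑(-(ω0 * τ0)) * I by push_cast [lam0]; ring]
    exact norm_exp_ofReal_mul_I _
  have hR : (R' lam0 * conj (R lam0)).im = _ := im_quartic_deriv_mul_conj a1 b1 c1 d1 ω0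
  have hQ : (Q' lam0 * conj (Q lam0)).im = _ := im_cubic_deriv_mul_conj a2 b2 c2 ω0
  have hmul : ω0 * h' (ω0 ^ 2) = 0 := by
    have key := im_mul_conj_eq_of_double_root he hroot hderiv
    rw [hR, hQ] at key
    simp only [h', p, q, u]
    linear_combination -key
  exact (mul_eq_zero.mp hmul).resolve_left hω.ne'

theorem multiple_root_implies_deriv_zero (a1 b1 c1 d1 a2 b2 c2 ω0 τ0 : ℝ)
    (hω : ω0 > 0) (hτ : τ0 ≥ 0) :
    let R : ℂ → ℂ := fun lam => lam^4 + (a1:ℂ)*lam^3 + (b1:ℂ)*lam^2 + (c1:ℂ)*lam + (d1:ℂ)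
    let R' : ℂ → ℂ := fun lam => 4*lam^3 + 3*(a1:ℂ)*lam^2 + 2*(b1:ℂ)*lam + (c1:ℂ)
    let Q : ℂ → ℂ := fun lam => (a2:ℂ)*lam^3 + (b2:ℂ)*lam^2 + (c2:ℂ)*lam
    let Q' : ℂ → ℂ := fun lam => 3*(a2:ℂ)*lam^2 + 2*(b2:ℂ)*lam + (c2:ℂ)
    let p := a1^2 - 2*b1 - a2^2
    let q := b1^2 + 2*d1 - 2*a1*c1 - b2^2 + 2*a2*c2
    let u := c1^2 - 2*b1*d1 - c2^2
    let h' : ℝ → ℝ := fun z => 4*z^3 + 3*p*z^2 + 2*q*z + u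
    let lam0 : ℂ := Complex.I * ω0
    R lam0 + Q lam0 * Complex.exp (-lam0 * τ0) = 0 →
    R lam0 ≠ 0 →
    R' lam0 + Q' lam0 * Complex.exp (-lam0 * τ0) - (τ0:ℂ) * Q lam0 * Complex.exp (-lam0 * τ0) = 0 →
    h' (ω0^2) = 0 :=
  multiple_root_implies_deriv_zero_general a1 b1 c1 d1 a2 b2 c2 ω0 τ0 hω
end
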